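/- arXiv:2206.10992 — 6 statements merged into one kernel-verified Lean document; each statement's English description precedes it below -/
import Mathlib

section
/- Let (X, d) be a locally compact metric space that is a Baire space, and let G be a group acting on X by homeomorphisms. If (1) there exists a point whose orbit under G is dense in X but not closed, and (2) the union of the minimal sets of G is a dense proper subset of X, then G is sensitive to initial conditions on (X, d). Moreover, G is sensitive with respect to every metric ρ on X that induces the same topology as d. -/
open Pointwise

/-- The diameter (in `ℝ≥0∞`) of a set `S` with respect to a distance function `d`. -/
noncomputable def ediamD {X : Type*} (d : X → X → ℝ) (S : Set X) : ENNReal :=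
  ⨆ (y : S) (z : S), ENNReal.ofReal (d y.1 z.1)

/-- `G` is sensitive to initial conditions with respect to the distance function `d`:
there is `δ > 0` such that for every nonempty open set `U` there is `g ∈ G` with
`diam (g • U) ≥ δ`. -/
def SensitiveOn (G : Type*) {X : Type*} [Group G] [MulAction G X] [TopologicalSpace X]
    (d : X → X → ℝ) : Prop :=
  ∃ δ : ℝ, 0 < δ ∧ ∀ U : Set X, IsOpen U → U.Nonempty →
    ∃ g : G, ENNReal.ofReal δ ≤ ediamD d (g • U)

/-- A minimal set of `G`: a nonempty closed `G`-invariant set in which every orbit is dense. -/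
def IsMinimalSet (G : Type*) {X : Type*} [Group G] [MulAction G X] [TopologicalSpace X]
    (M : Set X) : Prop :=
  M.Nonempty ∧ IsClosed M ∧ (∀ g : G, g • M ⊆ M) ∧
    ∀ x ∈ M, M ⊆ closure (MulAction.orbit G x)

/-!
Suppose `G` is not sensitive, so for every `δ > 0` some nonempty open set `U` keeps diameter `< δ`
under all of `G`. Such a `U` contains a point with dense orbit and a point `p` of a minimal set `M`.
Translates of the first point approach any `w`; by local compactness the corresponding translates
of `p` accumulate at some `y ∈ M`, and the orbits of `w` and `y` stay `δ`-close. The same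
extraction, applied to a point `q` outside all minimal sets and a point `z` of its orbit closure,
together with minimality of the shadowing set, brings the orbit of `z` back within `3δ` of `q`.
So the orbit closure of `q` is a minimal set containing `q`, which is absurd.
-/
open Filter Topology Metric MulAction

theorem IsCompact.exists_prodMk_mem_of_tendsto {ι X Y : Type*} [TopologicalSpace X]
    [TopologicalSpace Y] {K : Set Y} (hK : IsCompact K) {C : Set (X × Y)} (hC : IsClosed C)
    {l : Filter ι} [l.NeBot] {a : ι → X} {b : ι → Y} {w : X} (ha : Tendsto a l (𝓝 w))
    (hbK : ∀ᶠ i in l, b i ∈ K) (habC : ∀ᶠ i in l, (a i, b i) ∈ C) : ∃ y ∈ K, (w, y) ∈ C := by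
  let u := Ultrafilter.of l
  obtain ⟨y, hyK, hby⟩ := hK.ultrafilter_le_nhds (u.map b)
    (le_principal_iff.2 (Ultrafilter.of_le l hbK))
  have hab : Tendsto (fun i => (a i, b i)) u (𝓝 (w, y)) :=
    (ha.mono_left (Ultrafilter.of_le l)).prodMk_nhds hby
  exact ⟨y, hyK, hC.mem_of_tendsto hab (Ultrafilter.of_le l habC)⟩

theorem ofReal_le_ediamD {X : Type*} {d : X → X → ℝ} {S : Set X} {y z : X} (hy : y ∈ S)
    (hz : z ∈ S) : ENNReal.ofReal (d y z) ≤ ediamD d S :=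
  le_iSup_of_le (⟨y, hy⟩ : S) (le_iSup_of_le (⟨z, hz⟩ : S) le_rfl)

section TopologicalSpace

variable {G X : Type*} [Group G] [MulAction G X] [TopologicalSpace X]

theorem exists_isOpen_forall_lt_of_not_sensitiveOn {d : X → X → ℝ} (hns : ¬ SensitiveOn G d)
    {δ : ℝ} (hδ : 0 < δ) :
    ∃ U : Set X, IsOpen U ∧ U.Nonempty ∧ ∀ g : G, ∀ u ∈ U, ∀ v ∈ U, d (g • u) (g • v) < δ := by
  simp only [SensitiveOn, not_exists, not_and, not_forall, not_le] at hns
  obtain ⟨U, hUo, hUne, hU⟩ := hns δ hδ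
  refine ⟨U, hUo, hUne, fun g u hu v hv => ?_⟩
  exact (ENNReal.ofReal_lt_ofReal_iff hδ).1
    ((ofReal_le_ediamD (Set.smul_mem_smul_set hu) (Set.smul_mem_smul_set hv)).trans_lt (hU g))

theorem isMinimalSet_closure_orbit [ContinuousConstSMul G X] {q : X}
    (hq : ∀ z ∈ closure (orbit G q), q ∈ closure (orbit G z)) :
    IsMinimalSet G (closure (orbit G q)) := by
  refine ⟨⟨q, subset_closure (mem_orbit_self q)⟩, isClosed_closure,
    fun g => smul_closure_orbit_subset g q, fun z hz => ?_⟩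
  refine closure_minimal ?_ isClosed_closure
  rintro _ ⟨g, rfl⟩
  exact smul_closure_orbit_subset g z (Set.smul_mem_smul_set (hq z hz))

end TopologicalSpace

section PseudoMetricSpace

variable (G : Type*) {X : Type*} [Group G] [MulAction G X] [PseudoMetricSpace X]

def OrbitsWithin (η : ℝ) (x y : X) : Prop :=
  ∀ g : G, dist (g • x) (g • y) ≤ η

variable {G}

theorem OrbitsWithin.dist_le {η : ℝ} {x y : X} (h : OrbitsWithin G η x y) : dist x y ≤ η := by
  simpa only [one_smul] using h 1

theorem OrbitsWithin.mono {η η' : ℝ} {x y : X} (h : OrbitsWithin G η x y) (hη : η ≤ η') :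
    OrbitsWithin G η' x y :=
  fun g => (h g).trans hη

theorem OrbitsWithin.smul {η : ℝ} {x y : X} (h : OrbitsWithin G η x y) (c : G) :
    OrbitsWithin G η (c • x) (c • y) := by
  intro g
  simpa only [smul_smul] using h (g * c)

variable [ContinuousConstSMul G X]

theorem isClosed_setOf_orbitsWithin (η : ℝ) :
    IsClosed {p : X × X | OrbitsWithin G η p.1 p.2} := by
  simp only [OrbitsWithin, Set.ofPred_forall]
  exact isClosed_iInter fun g => isClosed_le (by fun_prop) continuous_const

theorem exists_orbitsWithin_of_mem_closure_orbit {M : Set X} (hM : IsClosed M)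
    (hMinv : ∀ g : G, g • M ⊆ M) {w a b : X} {r η : ℝ} (hK : IsCompact (closedBall w r))
    (hηr : η < r) (hbM : b ∈ M) (hab : OrbitsWithin G η a b) (hw : w ∈ closure (orbit G a)) :
    ∃ y ∈ M, OrbitsWithin G η w y := by
  have : (comap (fun g : G => g • a) (𝓝 w) : Filter G).NeBot :=
    comap_neBot_iff_frequently.2 (mem_closure_iff_frequently.1 hw)
  have hnear : ∀ᶠ g in comap (fun g : G => g • a) (𝓝 w), g • a ∈ ball w (r - η) :=
    tendsto_comap (ball_mem_nhds w (sub_pos.2 hηr))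
  have hbK : ∀ᶠ g in comap (fun g : G => g • a) (𝓝 w), g • b ∈ closedBall w r ∩ M := by
    filter_upwards [hnear] with g hg
    refine ⟨?_, hMinv g (Set.smul_mem_smul_set hbM)⟩
    rw [mem_closedBall]
    linarith [dist_triangle (g • b) (g • a) w, dist_comm (g • b) (g • a), (hab.smul g).dist_le,
      mem_ball.1 hg]
  obtain ⟨y, hy, hwy⟩ := (hK.inter_right hM).exists_prodMk_mem_of_tendsto
    (isClosed_setOf_orbitsWithin η) tendsto_comap hbK (Eventually.of_forall hab.smul)
  exact ⟨y, hy.2, hwy⟩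

variable [WeaklyLocallyCompactSpace X]

theorem exists_isMinimalSet_orbitsWithin_of_not_sensitiveOn
    (hns : ¬ SensitiveOn G (dist : X → X → ℝ)) {x : X} (hx : Dense (orbit G x))
    (hdense : Dense {x : X | ∃ M : Set X, IsMinimalSet G M ∧ x ∈ M}) (w : X) {ε : ℝ}
    (hε : 0 < ε) : ∃ M : Set X, IsMinimalSet G M ∧ ∃ y ∈ M, OrbitsWithin G ε w y := by
  obtain ⟨r, hr, hK⟩ := exists_isCompact_closedBall w
  obtain ⟨U, hUo, hUne, hU⟩ :=
    exists_isOpen_forall_lt_of_not_sensitiveOn hns (half_pos (lt_min hε hr))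
  obtain ⟨u, hux, huU⟩ := hx.exists_mem_open hUo hUne
  obtain ⟨p, ⟨M, hM, hpM⟩, hpU⟩ := hdense.exists_mem_open hUo hUne
  have hw : w ∈ closure (orbit G u) := by
    rw [orbit_eq_iff.2 hux, hx.closure_eq]
    exact Set.mem_univ w
  obtain ⟨y, hyM, hwy⟩ := exists_orbitsWithin_of_mem_closure_orbit hM.2.1 hM.2.2.1 hK
    (by linarith [min_le_right ε r]) hpM (fun g => (hU g u huU p hpU).le) hw
  exact ⟨M, hM, y, hyM, hwy.mono (by linarith [min_le_left ε r])⟩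

theorem mem_closure_orbit_of_forall_exists_isMinimalSet_orbitsWithin
    (hshadow : ∀ (w : X) (ε : ℝ), 0 < ε →
      ∃ M : Set X, IsMinimalSet G M ∧ ∃ y ∈ M, OrbitsWithin G ε w y)
    {q z : X} (hz : z ∈ closure (orbit G q)) : q ∈ closure (orbit G z) := by
  rw [Metric.mem_closure_iff]
  intro ε hε
  obtain ⟨r, hr, hK⟩ := exists_isCompact_closedBall z
  set η := min (ε / 3) (r / 2)
  have hη : 0 < η := lt_min (by linarith) (by linarith)
  obtain ⟨M, hM, m, hmM, hqm⟩ := hshadow q η hη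
  obtain ⟨z', hz'M, hzz'⟩ := exists_orbitsWithin_of_mem_closure_orbit hM.2.1 hM.2.2.1 hK
    (by linarith [min_le_right (ε / 3) (r / 2)]) hmM hqm hz
  obtain ⟨_, ⟨g, rfl⟩, hmg⟩ :=
    Metric.mem_closure_iff.1 (hM.2.2.2 z' hz'M hmM) η hη
  refine ⟨g • z, mem_orbit z g, ?_⟩
  calc dist q (g • z) ≤ dist q m + dist m (g • z') + dist (g • z') (g • z) :=
        dist_triangle4 _ _ _ _
    _ < η + η + η := by
        rw [dist_comm (g • z')]
        linarith [hqm.dist_le, hzz' g]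
    _ ≤ ε := by linarith [min_le_left (ε / 3) (r / 2)]

theorem sensitiveOn_dist_of_dense_orbit {x : X} (hx : Dense (orbit G x))
    (hdense : Dense {x : X | ∃ M : Set X, IsMinimalSet G M ∧ x ∈ M})
    (hproper : {x : X | ∃ M : Set X, IsMinimalSet G M ∧ x ∈ M} ≠ Set.univ) :
    SensitiveOn G (dist : X → X → ℝ) := by
  by_contra hns
  obtain ⟨q, hq⟩ := (Set.ne_univ_iff_exists_notMem _).1 hproper
  have hshadow := fun w ε (hε : 0 < ε) =>
    exists_isMinimalSet_orbitsWithin_of_not_sensitiveOn hns hx hdense w hε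
  exact hq ⟨_, isMinimalSet_closure_orbit fun z hz =>
    mem_closure_orbit_of_forall_exists_isMinimalSet_orbitsWithin hshadow hz,
    subset_closure (mem_orbit_self q)⟩

end PseudoMetricSpace

theorem sensitive_of_denseOrbit_denseMinimalSets_general {G X : Type*} [Group G] [MulAction G X]
    [MetricSpace X] [LocallyCompactSpace X]
    (hcont : ∀ g : G, Continuous fun x : X => g • x)
    (h1 : ∃ x : X, Dense (MulAction.orbit G x) ∧ ¬ IsClosed (MulAction.orbit G x))
    (h2dense : Dense {x : X | ∃ M : Set X, IsMinimalSet G M ∧ x ∈ M})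
    (h2proper : {x : X | ∃ M : Set X, IsMinimalSet G M ∧ x ∈ M} ≠ Set.univ) :
    SensitiveOn G (dist : X → X → ℝ) ∧
    ∀ ρ : X → X → ℝ,
      (∀ x y, ρ x y = ρ y x) →
      (∀ x y, ρ x y = 0 ↔ x = y) →
      (∀ x y z, ρ x z ≤ ρ x y + ρ y z) →
      (∀ s : Set X, IsOpen s ↔ ∀ x ∈ s, ∃ ε > 0, ∀ y, ρ x y < ε → y ∈ s) →
      SensitiveOn G ρ := by
  have : ContinuousConstSMul G X := ⟨hcont⟩
  obtain ⟨x, hx, -⟩ := h1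
  refine ⟨sensitiveOn_dist_of_dense_orbit hx h2dense h2proper,
    fun ρ hsymm hzero htri hopen => ?_⟩
  -- `ofDistTopology` keeps the given topology definitionally, so only the distance changes.
  let _ : PseudoMetricSpace X :=
    .ofDistTopology ρ (fun x => (hzero x x).2 rfl) hsymm htri hopen
  exact sensitiveOn_dist_of_dense_orbit hx h2dense h2proper

/-- Let `(X, d)` be a locally compact metric Baire space and `G` a group acting on `X` by
homeomorphisms. If `G` has a dense non-closed orbit and the union of the minimal sets of `G`
is a dense proper subset of `X`, then `G` is sensitive to initial conditions; moreover `G`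
is sensitive with respect to every metric `ρ` inducing the same topology as `d`. -/
theorem sensitive_of_denseOrbit_denseMinimalSets {G X : Type*} [Group G] [MulAction G X]
    [MetricSpace X] [LocallyCompactSpace X] [BaireSpace X]
    (hcont : ∀ g : G, Continuous fun x : X => g • x)
    (h1 : ∃ x : X, Dense (MulAction.orbit G x) ∧ ¬ IsClosed (MulAction.orbit G x))
    (h2dense : Dense {x : X | ∃ M : Set X, IsMinimalSet G M ∧ x ∈ M})
    (h2proper : {x : X | ∃ M : Set X, IsMinimalSet G M ∧ x ∈ M} ≠ Set.univ) :
    SensitiveOn G (dist : X → X → ℝ) ∧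
    ∀ ρ : X → X → ℝ,
      (∀ x y, ρ x y = ρ y x) →
      (∀ x y, ρ x y = 0 ↔ x = y) →
      (∀ x y z, ρ x z ≤ ρ x y + ρ y z) →
      (∀ s : Set X, IsOpen s ↔ ∀ x ∈ s, ∃ ε > 0, ∀ y, ρ x y < ε → y ∈ s) →
      SensitiveOn G ρ :=
  sensitive_of_denseOrbit_denseMinimalSets_general hcont h1 h2dense h2proper
end

section
/- Let (X, d) be a metric space that is a Baire space, and let G be a group acting on X by homeomorphisms having a dense non-closed orbit. Then G is pointwise sensitive (sensitive at every point of X) if and only if G is sensitive to initial conditions. -/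
open Pointwise

/-- `G` is sensitive at the point `x`: there is `δ > 0` such that for every open
neighborhood `U` of `x` there is `g ∈ G` with `diam (g • U) ≥ δ`. -/
def SensitiveAt (G : Type*) {X : Type*} [Group G] [MulAction G X] [TopologicalSpace X]
    (d : X → X → ℝ) (x : X) : Prop :=
  ∃ δ : ℝ, 0 < δ ∧ ∀ U : Set X, IsOpen U → x ∈ U →
    ∃ g : G, ENNReal.ofReal δ ≤ ediamD d (g • U)

/-!
The points at which the action is `δ`-stable (some neighbourhood keeps all its translates of
diameter `< δ`) form an open `G`-invariant set. With a dense orbit such a set is empty or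
dense. Pointwise sensitivity says that no point is `1/(n+1)`-stable for every `n`, so by
Baire's theorem these sets cannot all be dense; one of them is therefore empty, which is
sensitivity with constant `1/(n+1)`.
-/

theorem MulAction.dense_of_isOpen_of_smul_invariant {G X : Type*} [Group G] [MulAction G X]
    [TopologicalSpace X] {x₀ : X} (hx₀ : Dense (MulAction.orbit G x₀)) {s : Set X}
    (hs : IsOpen s) (hne : s.Nonempty) (hsmul : ∀ g : G, g • s ⊆ s) : Dense s := by
  obtain ⟨_, hgs, g, rfl⟩ := hx₀.inter_open_nonempty s hs hne
  refine (MulAction.orbit_smul g x₀ ▸ hx₀).mono ?_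
  rintro _ ⟨h, rfl⟩
  exact hsmul h (Set.smul_mem_smul_set hgs)

section StablePoints

variable (G : Type*) {X : Type*} [Group G] [MulAction G X] [TopologicalSpace X]
  (d : X → X → ℝ)

def stablePoints (δ : ℝ) : Set X :=
  {x | ∃ U : Set X, IsOpen U ∧ x ∈ U ∧ ∀ g : G, ediamD d (g • U) < ENNReal.ofReal δ}

theorem isOpen_stablePoints (δ : ℝ) : IsOpen (stablePoints G d δ) :=
  isOpen_iff_forall_mem_open.2 fun _ ⟨U, hU, hxU, hsmall⟩ =>
    ⟨U, fun _ hy => ⟨U, hU, hy, hsmall⟩, hU, hxU⟩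

theorem stablePoints_mono {δ δ' : ℝ} (h : δ ≤ δ') :
    stablePoints G d δ ⊆ stablePoints G d δ' := fun _ ⟨U, hU, hxU, hsmall⟩ =>
  ⟨U, hU, hxU, fun g => (hsmall g).trans_le (ENNReal.ofReal_le_ofReal h)⟩

theorem smul_stablePoints_subset [ContinuousConstSMul G X] (δ : ℝ) (g : G) :
    g • stablePoints G d δ ⊆ stablePoints G d δ := by
  rintro _ ⟨x, ⟨U, hU, hxU, hsmall⟩, rfl⟩
  refine ⟨g • U, hU.smul g, Set.smul_mem_smul_set hxU, fun k => ?_⟩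
  simpa only [smul_smul] using hsmall (k * g)

variable {G d}

theorem notMem_stablePoints_iff {x : X} {δ : ℝ} :
    x ∉ stablePoints G d δ ↔
      ∀ U : Set X, IsOpen U → x ∈ U → ∃ g : G, ENNReal.ofReal δ ≤ ediamD d (g • U) := by
  simp only [stablePoints, Set.mem_ofPred_eq, not_exists, not_and, not_forall, not_lt]

theorem sensitiveAt_iff_exists_notMem_stablePoints {x : X} :
    SensitiveAt G d x ↔ ∃ δ : ℝ, 0 < δ ∧ x ∉ stablePoints G d δ := by
  simp only [SensitiveAt, notMem_stablePoints_iff]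

theorem sensitiveOn_iff_exists_stablePoints_eq_empty :
    SensitiveOn G d ↔ ∃ δ : ℝ, 0 < δ ∧ stablePoints G d δ = ∅ := by
  refine exists_congr fun δ => and_congr_right fun _ => ⟨fun h => ?_, fun h U hU ⟨x, hxU⟩ => ?_⟩
  · refine Set.eq_empty_iff_forall_notMem.2 fun x ⟨U, hU, hxU, hsmall⟩ => ?_
    obtain ⟨g, hg⟩ := h U hU ⟨x, hxU⟩
    exact (hsmall g).not_ge hg
  · exact notMem_stablePoints_iff.1 (h ▸ Set.notMem_empty x) U hU hxU

theorem SensitiveOn.sensitiveAt (h : SensitiveOn G d) (x : X) : SensitiveAt G d x :=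
  let ⟨δ, hδ, hsens⟩ := h
  ⟨δ, hδ, fun U hU hxU => hsens U hU ⟨x, hxU⟩⟩

theorem exists_stablePoints_eq_empty [BaireSpace X] [ContinuousConstSMul G X] {x₀ : X}
    (hx₀ : Dense (MulAction.orbit G x₀)) (h : ∀ x, SensitiveAt G d x) :
    ∃ n : ℕ, stablePoints G d (1 / (n + 1)) = ∅ := by
  by_contra! hne
  have : Nonempty X := ⟨x₀⟩
  have hdense : Dense (⋂ n : ℕ, stablePoints G d (1 / (n + 1))) :=
    dense_iInter_of_isOpen (fun n => isOpen_stablePoints G d _) fun n =>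
      MulAction.dense_of_isOpen_of_smul_invariant hx₀ (isOpen_stablePoints G d _)
        (hne n) (smul_stablePoints_subset G d _)
  obtain ⟨x, hx⟩ := hdense.nonempty
  obtain ⟨δ, hδ, hxδ⟩ := sensitiveAt_iff_exists_notMem_stablePoints.1 (h x)
  obtain ⟨n, hn⟩ := exists_nat_one_div_lt hδ
  exact hxδ (stablePoints_mono G d hn.le (Set.mem_iInter.1 hx n))

end StablePoints

/-- For a group `G` acting by homeomorphisms on a metric Baire space `(X, d)` and having a
dense non-closed orbit, `G` is pointwise sensitive if and only if `G` is sensitive to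
initial conditions. -/
theorem pointwiseSensitive_iff_sensitive {G X : Type*} [Group G] [MulAction G X]
    [MetricSpace X] [BaireSpace X]
    (hcont : ∀ g : G, Continuous fun x : X => g • x)
    (hdno : ∃ x : X, Dense (MulAction.orbit G x) ∧ ¬ IsClosed (MulAction.orbit G x)) :
    (∀ x : X, SensitiveAt G (dist : X → X → ℝ) x) ↔ SensitiveOn G (dist : X → X → ℝ) := by
  have : ContinuousConstSMul G X := ⟨hcont⟩
  obtain ⟨x₀, hx₀, -⟩ := hdno
  refine ⟨fun h => ?_, fun h => h.sensitiveAt⟩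
  obtain ⟨n, hn⟩ := exists_stablePoints_eq_empty hx₀ h
  exact sensitiveOn_iff_exists_stablePoints_eq_empty.2 ⟨_, by positivity, hn⟩
end

section
/- Let G be a group acting on a metric space (X, d) by homeomorphisms. If x ∈ X is a sensitive point of G with sensitivity constant δ = δ(x) > 0, then every point of the closure of the orbit G.x is also a sensitive point of G with the same sensitivity constant δ. -/
open Pointwise

/-- `G` is sensitive at the point `x` with sensitivity constant `δ`: for every open
neighborhood `U` of `x` there is `g ∈ G` with `diam (g • U) ≥ δ`. -/
def SensitiveAtWith (G : Type*) {X : Type*} [Group G] [MulAction G X] [TopologicalSpace X]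
    (d : X → X → ℝ) (δ : ℝ) (x : X) : Prop :=
  ∀ U : Set X, IsOpen U → x ∈ U →
    ∃ g : G, ENNReal.ofReal δ ≤ ediamD d (g • U)

/-! Sensitive points are invariant under the action, and they form a closed set since
sensitivity at `x` only concerns open neighbourhoods of `x`, which are also open
neighbourhoods of all nearby points. -/

section

variable {G X : Type*} [Group G] [MulAction G X] [TopologicalSpace X] {d : X → X → ℝ} {δ : ℝ}

theorem SensitiveAtWith.smul [ContinuousConstSMul G X] {x : X}
    (hx : SensitiveAtWith G d δ x) (g : G) : SensitiveAtWith G d δ (g • x) := by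
  intro U hU hgxU
  obtain ⟨h, hh⟩ := hx (g⁻¹ • U) (hU.smul g⁻¹) (Set.mem_inv_smul_set_iff.mpr hgxU)
  exact ⟨h * g⁻¹, by rwa [mul_smul]⟩

theorem isClosed_setOf_sensitiveAtWith : IsClosed {x : X | SensitiveAtWith G d δ x} := by
  refine isClosed_of_closure_subset fun y hy U hU hyU => ?_
  obtain ⟨p, hpU, hp⟩ := mem_closure_iff.mp hy U hU hyU
  exact hp U hU hpU

end

theorem sensitiveAt_closure_orbit_general {G X : Type*} [Group G] [MulAction G X] [MetricSpace X]
    (hcont : ∀ g : G, Continuous fun x : X => g • x)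
    {δ : ℝ} {x : X}
    (hx : SensitiveAtWith G (dist : X → X → ℝ) δ x) :
    ∀ y ∈ closure (MulAction.orbit G x), SensitiveAtWith G (dist : X → X → ℝ) δ y := by
  have : ContinuousConstSMul G X := ⟨hcont⟩
  refine fun y hy => closure_minimal ?_ isClosed_setOf_sensitiveAtWith hy
  rintro _ ⟨g, rfl⟩
  exact hx.smul g

/-- If `x` is a sensitive point of a group `G` acting by homeomorphisms on a metric space
`(X, d)`, with sensitivity constant `δ > 0`, then every point of the closure of the orbit
`G.x` is a sensitive point with the same constant `δ`. -/
theorem sensitiveAt_closure_orbit {G X : Type*} [Group G] [MulAction G X] [MetricSpace X]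
    (hcont : ∀ g : G, Continuous fun x : X => g • x)
    {δ : ℝ} (hδ : 0 < δ) {x : X}
    (hx : SensitiveAtWith G (dist : X → X → ℝ) δ x) :
    ∀ y ∈ closure (MulAction.orbit G x), SensitiveAtWith G (dist : X → X → ℝ) δ y :=
  sensitiveAt_closure_orbit_general hcont hx
end

section
/- Let (X, d) be a metric space and let G be a group acting on X by homeomorphisms. Assume G has a dense non-closed orbit and G is not sensitive to initial conditions. Then the set 𝒩𝒮 of insensitive (equicontinuous) points of G equals the set 𝒟 of points with dense orbit. If moreover (X, d) is a Baire space, then 𝒟 is a dense G_δ subset of X, and 𝒟 = X when every orbit of G is dense. -/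
open Pointwise

/-!
For `ε > 0` let `E ε` (`epsInsensitivePoints`) be the set of points having a neighbourhood all of
whose translates have diameter `< ε`, so that `𝒩𝒮 = ⋂ₙ E (1 / (n + 1))`. Each `E ε` is open and
`G`-invariant, and it is nonempty because `G` is not sensitive; hence it contains every point with
dense orbit and is itself dense. This gives `𝒟 ⊆ 𝒩𝒮` and, by Baire, that `𝒩𝒮` is a dense `G_δ`.
Conversely, let `x` be insensitive and `y` have dense orbit. A neighbourhood `U` of `x` with small
translates meets the orbit of `y` at some `g • y`, and then `g⁻¹ • U` contains both `y` and
`g⁻¹ • x`; so `y` is in the closure of the orbit of `x`, which is therefore dense.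
-/

lemma le_ediamD {X : Type*} (d : X → X → ℝ) {S : Set X} {y z : X} (hy : y ∈ S) (hz : z ∈ S) :
    ENNReal.ofReal (d y z) ≤ ediamD d S :=
  le_iSup_of_le ⟨y, hy⟩ (le_iSup_of_le ⟨z, hz⟩ le_rfl)

def epsInsensitivePoints (G : Type*) {X : Type*} [Group G] [MulAction G X] [TopologicalSpace X]
    (d : X → X → ℝ) (ε : ℝ) : Set X :=
  {x | ∃ U : Set X, IsOpen U ∧ x ∈ U ∧ ∀ g : G, ediamD d (g • U) < ENNReal.ofReal ε}

open MulAction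

section

variable {G X : Type*} [Group G] [MulAction G X]

theorem mem_of_dense_orbit_of_isOpen [TopologicalSpace X] {s : Set X} (hs : IsOpen s)
    (hne : s.Nonempty) (hinv : ∀ g : G, ∀ y ∈ s, g • y ∈ s) {x : X}
    (hx : Dense (orbit G x)) : x ∈ s := by
  obtain ⟨_, ⟨g, rfl⟩, hgx⟩ := hx.exists_mem_open hs hne
  simpa using hinv g⁻¹ _ hgx

section Topological

variable [TopologicalSpace X] {d : X → X → ℝ}

theorem isOpen_epsInsensitivePoints (ε : ℝ) : IsOpen (epsInsensitivePoints G d ε) :=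
  isOpen_iff_forall_mem_open.2 fun _ ⟨U, hUo, hxU, hU⟩ =>
    ⟨U, fun _ hy => ⟨U, hUo, hy, hU⟩, hUo, hxU⟩

theorem epsInsensitivePoints_mono {ε ε' : ℝ} (h : ε ≤ ε') :
    epsInsensitivePoints G d ε ⊆ epsInsensitivePoints G d ε' :=
  fun _ ⟨U, hUo, hxU, hU⟩ =>
    ⟨U, hUo, hxU, fun g => (hU g).trans_le (ENNReal.ofReal_le_ofReal h)⟩

theorem not_sensitiveAt_iff {x : X} :
    ¬ SensitiveAt G d x ↔ ∀ ε > 0, x ∈ epsInsensitivePoints G d ε := by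
  simp [SensitiveAt, epsInsensitivePoints]

theorem setOf_not_sensitiveAt_eq_iInter :
    {x : X | ¬ SensitiveAt G d x} = ⋂ n : ℕ, epsInsensitivePoints G d (1 / (n + 1)) := by
  ext x
  simp only [Set.mem_ofPred_eq, not_sensitiveAt_iff, Set.mem_iInter]
  refine ⟨fun h n => h _ Nat.one_div_pos_of_nat, fun h ε hε => ?_⟩
  obtain ⟨n, hn⟩ := exists_nat_one_div_lt hε
  exact epsInsensitivePoints_mono hn.le (h n)

theorem epsInsensitivePoints_nonempty (hns : ¬ SensitiveOn G d) {ε : ℝ} (hε : 0 < ε) :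
    (epsInsensitivePoints G d ε).Nonempty := by
  simp only [SensitiveOn, not_exists, not_and, not_forall, not_le] at hns
  obtain ⟨U, hUo, ⟨x, hxU⟩, hU⟩ := hns ε hε
  exact ⟨x, U, hUo, hxU, hU⟩

theorem smul_mem_epsInsensitivePoints [ContinuousConstSMul G X] {ε : ℝ} {x : X}
    (hx : x ∈ epsInsensitivePoints G d ε) (g : G) : g • x ∈ epsInsensitivePoints G d ε := by
  obtain ⟨U, hUo, hxU, hU⟩ := hx
  exact ⟨g • U, hUo.smul g, Set.smul_mem_smul_set hxU, fun h => by rw [smul_smul]; exact hU _⟩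

variable [ContinuousConstSMul G X]

theorem mem_epsInsensitivePoints_of_dense_orbit (hns : ¬ SensitiveOn G d) {ε : ℝ} (hε : 0 < ε) {x : X}
    (hx : Dense (orbit G x)) : x ∈ epsInsensitivePoints G d ε :=
  mem_of_dense_orbit_of_isOpen (isOpen_epsInsensitivePoints ε)
    (epsInsensitivePoints_nonempty hns hε) (fun g _ hy => smul_mem_epsInsensitivePoints hy g) hx

theorem not_sensitiveAt_of_dense_orbit (hns : ¬ SensitiveOn G d) {x : X} (hx : Dense (orbit G x)) :
    ¬ SensitiveAt G d x :=
  not_sensitiveAt_iff.2 fun _ hε => mem_epsInsensitivePoints_of_dense_orbit hns hε hx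

theorem dense_epsInsensitivePoints (hns : ¬ SensitiveOn G d) {x₀ : X} (hx₀ : Dense (orbit G x₀)) {ε : ℝ} (hε : 0 < ε) :
    Dense (epsInsensitivePoints G d ε) :=
  hx₀.mono <| by
    rintro _ ⟨g, rfl⟩
    exact smul_mem_epsInsensitivePoints (mem_epsInsensitivePoints_of_dense_orbit hns hε hx₀) g

end Topological

section Metric

variable [PseudoMetricSpace X]

theorem mem_closure_orbit_of_not_sensitiveAt {x y : X} (hx : ¬ SensitiveAt G dist x)
    (hxy : x ∈ closure (orbit G y)) : y ∈ closure (orbit G x) := by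
  refine Metric.mem_closure_iff.2 fun ε hε => ?_
  obtain ⟨U, hUo, hxU, hU⟩ := not_sensitiveAt_iff.1 hx ε hε
  obtain ⟨_, hgyU, g, rfl⟩ := mem_closure_iff.1 hxy U hUo hxU
  have hy : y ∈ g⁻¹ • U := by simpa using Set.smul_mem_smul_set (a := g⁻¹) hgyU
  have hdist := (le_ediamD dist hy (Set.smul_mem_smul_set hxU)).trans_lt (hU g⁻¹)
  exact ⟨g⁻¹ • x, ⟨g⁻¹, rfl⟩, (ENNReal.ofReal_lt_ofReal_iff hε).1 hdist⟩

theorem dense_orbit_of_not_sensitiveAt {x₀ x : X} (hx₀ : Dense (orbit G x₀))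
    (hx : ¬ SensitiveAt G dist x) : Dense (orbit G x) := by
  refine dense_closure.1 (hx₀.mono ?_)
  rintro _ ⟨g, rfl⟩
  exact mem_closure_orbit_of_not_sensitiveAt hx (by rw [orbit_smul]; exact hx₀ x)

end Metric

end

/-- Let `G` act by homeomorphisms on a metric space `(X, d)`, with a dense non-closed orbit,
and assume `G` is not sensitive to initial conditions. Then the set `𝒩𝒮` of insensitive
(equicontinuous) points equals the set `𝒟` of points with dense orbit; if moreover `X` is a
Baire space, then `𝒟` is a dense `G_δ` set, equal to `X` when every orbit is dense. -/
theorem insensitive_eq_denseOrbits {G X : Type*} [Group G] [MulAction G X] [MetricSpace X]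
    (hcont : ∀ g : G, Continuous fun x : X => g • x)
    (hdno : ∃ x : X, Dense (MulAction.orbit G x) ∧ ¬ IsClosed (MulAction.orbit G x))
    (hns : ¬ SensitiveOn G (dist : X → X → ℝ)) :
    {x : X | ¬ SensitiveAt G (dist : X → X → ℝ) x} = {x : X | Dense (MulAction.orbit G x)} ∧
    (BaireSpace X →
      Dense {x : X | Dense (MulAction.orbit G x)} ∧
      IsGδ {x : X | Dense (MulAction.orbit G x)} ∧
      ((∀ x : X, Dense (MulAction.orbit G x)) →
        {x : X | Dense (MulAction.orbit G x)} = Set.univ)) := by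
  have : ContinuousConstSMul G X := ⟨hcont⟩
  obtain ⟨x₀, hx₀, -⟩ := hdno
  have hEq : {x : X | ¬ SensitiveAt G dist x} = {x : X | Dense (orbit G x)} :=
    Set.ext fun _ => ⟨dense_orbit_of_not_sensitiveAt hx₀, not_sensitiveAt_of_dense_orbit hns⟩
  refine ⟨hEq, fun _ => ⟨?_, ?_, Set.eq_univ_of_forall⟩⟩ <;>
    rw [← hEq, setOf_not_sensitiveAt_eq_iInter]
  · exact dense_iInter_of_isOpen (fun _ => isOpen_epsInsensitivePoints _)
      fun _ => dense_epsInsensitivePoints hns hx₀ Nat.one_div_pos_of_nat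
  · exact .iInter_of_isOpen fun _ => isOpen_epsInsensitivePoints _
end

section
/- Let (X, d) be a metric space that is a Baire space and let G be a group acting on X by homeomorphisms having a dense non-closed orbit. Then either G is almost equicontinuous (the set of equicontinuous points of G is dense in X) or G is sensitive to initial conditions. -/
/-!
For `ε > 0` let `E ε` be the open set of points having a neighbourhood all of whose translates
have diameter `< ε`; a point is an equicontinuous point iff it lies in every `E (1 / (n + 1))`.
If all these open sets are dense, the Baire property makes their intersection dense, so the action
is almost equicontinuous. Otherwise some `E ε` misses a nonempty open set `W`, and every nonempty
open subset of `W` is stretched to diameter `≥ ε` by some group element. A dense orbit makes the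
action topologically transitive, so any nonempty open `U` has a translate meeting `W`, and hence a
translate of diameter `≥ ε`: the action is sensitive.
-/

open Pointwise

open MulAction

lemma ediamD_mono {X : Type*} {d : X → X → ℝ} {S T : Set X} (h : S ⊆ T) :
    ediamD d S ≤ ediamD d T :=
  iSup_le fun y => iSup_le fun z =>
    le_iSup_of_le ⟨y.1, h y.2⟩ (le_iSup_of_le ⟨z.1, h z.2⟩ le_rfl)

section

variable {G X : Type*} [Group G] [MulAction G X] [TopologicalSpace X]

variable (G) in
def epsEquicontinuousPoints (d : X → X → ℝ) (ε : ℝ) : Set X :=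
  {x | ∃ U : Set X, IsOpen U ∧ x ∈ U ∧ ∀ g : G, ediamD d (g • U) < ENNReal.ofReal ε}

lemma isOpen_epsEquicontinuousPoints (d : X → X → ℝ) (ε : ℝ) :
    IsOpen (epsEquicontinuousPoints G d ε) := by
  refine isOpen_iff_forall_mem_open.mpr ?_
  rintro x ⟨U, hUo, hxU, hU⟩
  exact ⟨U, fun y hy => ⟨U, hUo, hy, hU⟩, hUo, hxU⟩

lemma not_sensitiveAt_of_mem_iInter {d : X → X → ℝ} {x : X}
    (hx : x ∈ ⋂ n : ℕ, epsEquicontinuousPoints G d (1 / (n + 1))) : ¬ SensitiveAt G d x := by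
  rintro ⟨δ, hδ, hsens⟩
  obtain ⟨n, hn⟩ := exists_nat_one_div_lt hδ
  obtain ⟨U, hUo, hxU, hU⟩ := Set.mem_iInter.mp hx n
  obtain ⟨g, hg⟩ := hsens U hUo hxU
  exact (hU g).not_ge (le_trans (ENNReal.ofReal_le_ofReal hn.le) hg)

lemma dense_not_sensitiveAt [BaireSpace X] {d : X → X → ℝ}
    (h : ∀ n : ℕ, Dense (epsEquicontinuousPoints G d (1 / (n + 1)))) :
    Dense {x : X | ¬ SensitiveAt G d x} :=
  (dense_iInter_of_isOpen (fun _ => isOpen_epsEquicontinuousPoints d _) h).mono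
    fun _ => not_sensitiveAt_of_mem_iInter

lemma exists_le_ediamD_smul {d : X → X → ℝ} {ε : ℝ} {V : Set X} (hVo : IsOpen V)
    {x : X} (hxV : x ∈ V) (hx : x ∉ epsEquicontinuousPoints G d ε) :
    ∃ g : G, ENNReal.ofReal ε ≤ ediamD d (g • V) := by
  by_contra! hV
  exact hx ⟨V, hVo, hxV, hV⟩

lemma MulAction.isTopologicallyTransitive_of_dense_orbit {x : X} (hx : Dense (orbit G x)) :
    IsTopologicallyTransitive G X := by
  refine ⟨fun {U V} hUo hUne hVo hVne => ?_⟩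
  obtain ⟨_, hgU, g, rfl⟩ := hx.inter_open_nonempty U hUo hUne
  obtain ⟨_, hhV, h, rfl⟩ := hx.inter_open_nonempty V hVo hVne
  refine ⟨h * g⁻¹, h • x, ⟨g • x, hgU, ?_⟩, hhV⟩
  simp only [smul_smul, inv_mul_cancel_right]

lemma sensitiveOn_of_not_dense [ContinuousConstSMul G X] [IsTopologicallyTransitive G X]
    {d : X → X → ℝ} {ε : ℝ} (hε : 0 < ε)
    (h : ¬ Dense (epsEquicontinuousPoints G d ε)) :
    SensitiveOn G d := by
  obtain ⟨W, hWo, hWne, hW⟩ : ∃ W : Set X, IsOpen W ∧ W.Nonempty ∧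
      ¬ (W ∩ epsEquicontinuousPoints G d ε).Nonempty := by
    simpa [dense_iff_inter_open] using h
  refine ⟨ε, hε, fun U hUo hUne => ?_⟩
  obtain ⟨k, y, hykU, hyW⟩ :=
    IsTopologicallyTransitive.exists_smul_inter (M := G) hUo hUne hWo hWne
  have hy : y ∉ epsEquicontinuousPoints G d ε := fun hyE => hW ⟨y, hyW, hyE⟩
  obtain ⟨g, hg⟩ := exists_le_ediamD_smul ((hUo.smul k).inter hWo) ⟨hykU, hyW⟩ hy
  refine ⟨g * k, hg.trans (ediamD_mono ?_)⟩
  rw [mul_smul]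
  exact Set.smul_set_mono Set.inter_subset_left

end

/-- A group `G` acting by homeomorphisms on a metric Baire space `(X, d)` with a dense
non-closed orbit is either almost equicontinuous (its set of equicontinuous points is
dense) or sensitive to initial conditions. -/
theorem almostEquicontinuous_or_sensitive {G X : Type*} [Group G] [MulAction G X]
    [MetricSpace X] [BaireSpace X]
    (hcont : ∀ g : G, Continuous fun x : X => g • x)
    (hdno : ∃ x : X, Dense (MulAction.orbit G x) ∧ ¬ IsClosed (MulAction.orbit G x)) :
    Dense {x : X | ¬ SensitiveAt G (dist : X → X → ℝ) x} ∨
      SensitiveOn G (dist : X → X → ℝ) := by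
  have : ContinuousConstSMul G X := ⟨hcont⟩
  obtain ⟨x, hx, -⟩ := hdno
  have := isTopologicallyTransitive_of_dense_orbit hx
  by_cases h : ∀ n : ℕ, Dense (epsEquicontinuousPoints G (dist : X → X → ℝ) (1 / (n + 1)))
  · exact .inl (dense_not_sensitiveAt h)
  · push Not at h
    obtain ⟨n, hn⟩ := h
    exact .inr (sensitiveOn_of_not_dense Nat.one_div_pos_of_nat hn)
end

section
/- For each i ∈ ℕ, let G_i be a countable group acting by homeomorphisms on a compact metrizable space X_i, and assume each G_i is chaotic on X_i. Let G = ∏_{i∈ℕ} G_i act canonically on the Tychonoff product X = ∏_{i∈ℕ} X_i. Then (1) G is chaotic on X; (2) there exists a dense orbit of G in X which has the cardinality of the continuum; and (3) if in addition every G_i has a fixed point in X_i, then the union of the finite orbits of G is dense in X and G has a fixed point in X. -/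
/-- `G` is chaotic on `X`: it has a dense non-closed orbit and the union of its
closed orbits is dense. -/
def Chaotic (G X : Type*) [Group G] [MulAction G X] [TopologicalSpace X] : Prop :=
  (∃ x : X, Dense (MulAction.orbit G x) ∧ ¬ IsClosed (MulAction.orbit G x)) ∧
  Dense (⋃ x ∈ {y : X | IsClosed (MulAction.orbit G y)}, MulAction.orbit G x)

/-!
The orbit of `x` under `∏ Gᵢ` is the box `∏ Gᵢ • xᵢ`, so density and closedness of orbits
pass to the product coordinatewise, and a product of countably many countably infinite
orbits has cardinality `ℵ₀ ^ ℵ₀ = 𝔠`. A closed orbit of a countable group acting on a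
compact Hausdorff space is a countable compact Hausdorff space, hence Baire, so one of its
(countably many, closed) points is isolated; by homogeneity all of them are, and a discrete
compact space is finite. Given fixed points `pᵢ`, points agreeing with `p` outside a finite
set of coordinates and having finite orbits in the remaining ones have finite orbits in the
product, and they are dense.
-/

open MulAction Set
open scoped Cardinal

theorem exists_isOpen_singleton_of_countable {X : Type*} [TopologicalSpace X] [BaireSpace X]
    [T1Space X] [Countable X] [Nonempty X] : ∃ x : X, IsOpen ({x} : Set X) := by
  obtain ⟨x, y, hy⟩ := nonempty_interior_of_iUnion_of_closed
    (f := fun x : X => ({x} : Set X)) (fun _ => isClosed_singleton) (iUnion_of_singleton X)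
  refine ⟨x, interior_eq_iff_isOpen.mp ?_⟩
  exact (Set.Nonempty.subset_singleton_iff ⟨y, hy⟩).mp interior_subset

theorem Set.Finite.univ_pi_of_subsingleton {ι : Type*} {X : ι → Type*} {S : ∀ i, Set (X i)}
    (F : Finset ι) (hfin : ∀ i ∈ F, (S i).Finite) (hsub : ∀ i ∉ F, (S i).Subsingleton) :
    (univ.pi S).Finite := by
  refine Finite.of_finite_image (f := fun x (i : F) => x i) ?_ ?_
  · refine (Finite.pi fun i : F => hfin i i.2).subset ?_
    rintro _ ⟨x, hx, rfl⟩ i -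
    exact hx i (mem_univ _)
  · intro x hx y hy hxy
    funext i
    by_cases hi : i ∈ F
    · exact congrFun hxy ⟨i, hi⟩
    · exact hsub i hi (hx i (mem_univ _)) (hy i (mem_univ _))

theorem IsClosed.of_univ_pi {ι : Type*} {X : ι → Type*} [∀ i, TopologicalSpace (X i)]
    {S : ∀ i, Set (X i)} (hne : (univ.pi S).Nonempty) (h : IsClosed (univ.pi S)) (i : ι) :
    IsClosed (S i) := by
  have hbox : univ.pi S = univ.pi fun i => closure (S i) := by
    rw [← closure_pi_set, h.closure_eq]
  rw [← closure_eq_iff_isClosed]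
  calc closure (S i) = Function.eval i '' univ.pi fun i => closure (S i) :=
        (eval_image_univ_pi (hbox ▸ hne)).symm
    _ = S i := by rw [← hbox, eval_image_univ_pi hne]

theorem dense_iUnion_finset_piecewise {ι : Type*} [DecidableEq ι] {X : ι → Type*}
    [∀ i, TopologicalSpace (X i)] {A : ∀ i, Set (X i)} (hA : ∀ i, Dense (A i)) (p : ∀ i, X i) :
    Dense (⋃ F : Finset ι, (F.piecewise · p) '' univ.pi A) := by
  refine dense_closure.mp ((dense_pi univ fun i _ => hA i).mono fun x hx => ?_)
  refine mem_closure_iff_nhds.mpr fun s hs => ?_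
  obtain ⟨F, hF⟩ := exists_finset_piecewise_mem_of_mem_nhds hs p
  exact ⟨_, hF, mem_iUnion.mpr ⟨F, x, hx, rfl⟩⟩

theorem Cardinal.mk_univ_pi_of_mk_eq_aleph0 {X : ℕ → Type*} {S : ∀ i, Set (X i)}
    (h : ∀ i, #(S i) = ℵ₀) : #(Set.univ.pi S) = 𝔠 := by
  rw [Cardinal.mk_congr (Equiv.Set.univPi S), Cardinal.mk_pi]
  simp [h, Cardinal.prod_const, Cardinal.aleph0_power_aleph0]

namespace MulAction

section

variable {G X : Type*} [Group G] [MulAction G X]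

theorem orbit_subsingleton_of_forall_smul_eq {p : X} (hp : ∀ g : G, g • p = p) :
    (orbit G p).Subsingleton := by
  rintro _ ⟨g, rfl⟩ _ ⟨h, rfl⟩
  simp only [hp]

variable [TopologicalSpace X]

theorem biUnion_isClosed_orbit :
    ⋃ x ∈ {y : X | IsClosed (orbit G y)}, orbit G x = {y : X | IsClosed (orbit G y)} := by
  ext y
  simp only [mem_iUnion, mem_ofPred_eq, exists_prop]
  exact ⟨fun ⟨x, hx, hyx⟩ => orbit_eq_iff.mpr hyx ▸ hx, fun hy => ⟨y, hy, mem_orbit_self y⟩⟩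

theorem mk_orbit_eq_aleph0 [Countable G] [T1Space X] {x : X} (h : ¬IsClosed (orbit G x)) :
    #(orbit G x) = ℵ₀ := by
  have : Countable (orbit G x) := (countable_range fun g : G => g • x).to_subtype
  have : Infinite (orbit G x) := infinite_coe_iff.mpr fun hfin => h hfin.isClosed
  exact Cardinal.mk_eq_aleph0 _

theorem finite_orbit_of_isClosed [Countable G] [CompactSpace X] [T2Space X]
    [ContinuousConstSMul G X] {x : X} (h : IsClosed (orbit G x)) : (orbit G x).Finite := by
  have : CompactSpace (orbit G x) := isCompact_iff_compactSpace.mp h.isCompact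
  have : Countable (orbit G x) := (countable_range fun g : G => g • x).to_subtype
  have : Nonempty (orbit G x) := ⟨⟨x, mem_orbit_self x⟩⟩
  have : ContinuousConstSMul G (orbit G x) :=
    ⟨fun g => ((continuous_const_smul g).comp continuous_subtype_val).subtype_mk _⟩
  obtain ⟨y, hy⟩ := exists_isOpen_singleton_of_countable (X := orbit G x)
  have := (IsPretransitive.discreteTopology_iff G y).mpr hy
  exact finite_coe_iff.mp finite_of_compact_of_discrete

end

section Pi

variable {ι : Type*} {G X : ι → Type*} [∀ i, Group (G i)] [∀ i, MulAction (G i) (X i)]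

theorem orbit_pi (x : ∀ i, X i) :
    orbit (∀ i, G i) x = univ.pi fun i => orbit (G i) (x i) := by
  ext y
  refine ⟨?_, fun hy => ?_⟩
  · rintro ⟨g, rfl⟩ i -
    exact ⟨g i, rfl⟩
  · choose g hg using fun i => hy i (mem_univ i)
    exact ⟨g, funext hg⟩

theorem finite_orbit_piecewise [DecidableEq ι] {x p : ∀ i, X i} (F : Finset ι)
    (hx : ∀ i ∈ F, (orbit (G i) (x i)).Finite) (hp : ∀ i, ∀ g : G i, g • p i = p i) :
    (orbit (∀ i, G i) (F.piecewise x p)).Finite := by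
  rw [orbit_pi]
  refine Finite.univ_pi_of_subsingleton F (fun i hi => ?_) fun i hi => ?_
  · rw [F.piecewise_eq_of_mem _ _ hi]
    exact hx i hi
  · rw [F.piecewise_eq_of_notMem _ _ hi]
    exact orbit_subsingleton_of_forall_smul_eq (hp i)

variable [∀ i, TopologicalSpace (X i)]

theorem dense_orbit_pi {x : ∀ i, X i} (h : ∀ i, Dense (orbit (G i) (x i))) :
    Dense (orbit (∀ i, G i) x) := by
  rw [orbit_pi]
  exact dense_pi univ fun i _ => h i

theorem isClosed_orbit_pi {x : ∀ i, X i} (h : ∀ i, IsClosed (orbit (G i) (x i))) :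
    IsClosed (orbit (∀ i, G i) x) := by
  rw [orbit_pi]
  exact isClosed_set_pi fun i _ => h i

theorem not_isClosed_orbit_pi {x : ∀ i, X i} (i : ι) (h : ¬IsClosed (orbit (G i) (x i))) :
    ¬IsClosed (orbit (∀ i, G i) x) := by
  rw [orbit_pi]
  exact fun hcl => h (hcl.of_univ_pi ⟨x, fun i _ => mem_orbit_self (x i)⟩ i)

end Pi

end MulAction

section Chaotic

variable {G X : Type*} [Group G] [MulAction G X] [TopologicalSpace X]

theorem Chaotic.dense_setOf_isClosed_orbit (h : Chaotic G X) :
    Dense {y : X | IsClosed (orbit G y)} :=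
  biUnion_isClosed_orbit (G := G) (X := X) ▸ h.2

theorem Chaotic.dense_setOf_finite_orbit [Countable G] [CompactSpace X] [T2Space X]
    [ContinuousConstSMul G X] (h : Chaotic G X) : Dense {y : X | (orbit G y).Finite} :=
  h.dense_setOf_isClosed_orbit.mono fun _ => finite_orbit_of_isClosed

theorem Chaotic.pi {ι : Type*} [Nonempty ι] {G X : ι → Type*} [∀ i, Group (G i)]
    [∀ i, MulAction (G i) (X i)] [∀ i, TopologicalSpace (X i)] (h : ∀ i, Chaotic (G i) (X i)) :
    Chaotic (∀ i, G i) (∀ i, X i) := by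
  choose x hdense hnotClosed using fun i => (h i).1
  refine ⟨⟨x, dense_orbit_pi hdense, not_isClosed_orbit_pi (Classical.arbitrary ι)
    (hnotClosed _)⟩, ?_⟩
  rw [biUnion_isClosed_orbit]
  refine (dense_pi univ fun i _ => (h i).dense_setOf_isClosed_orbit).mono ?_
  exact fun y hy => isClosed_orbit_pi fun i => hy i (mem_univ i)

end Chaotic

/-- For each `i ∈ ℕ`, let `G_i` be a countable group acting chaotically by homeomorphisms
on a compact metrizable space `X_i`, and let `G = ∏ G_i` act canonically on the Tychonoff
product `X = ∏ X_i`. Then `G` is chaotic on `X`; there is a dense orbit of `G` of continuum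
cardinality; and if every `G_i` has a fixed point, then the union of the finite orbits of
`G` is dense in `X` and `G` has a fixed point. -/
theorem countableProduct_chaotic {X G : ℕ → Type*}
    [∀ i, TopologicalSpace (X i)] [∀ i, CompactSpace (X i)]
    [∀ i, TopologicalSpace.MetrizableSpace (X i)]
    [∀ i, Group (G i)] [∀ i, Countable (G i)] [∀ i, MulAction (G i) (X i)]
    (hcont : ∀ (i : ℕ) (g : G i), Continuous fun x : X i => g • x)
    (hchaos : ∀ i, Chaotic (G i) (X i)) :
    Chaotic (∀ i, G i) (∀ i, X i) ∧
    (∃ x : ∀ i, X i, Dense (MulAction.orbit (∀ i, G i) x) ∧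
      Cardinal.mk (MulAction.orbit (∀ i, G i) x) = Cardinal.continuum) ∧
    ((∀ i, ∃ p : X i, ∀ g : G i, g • p = p) →
      Dense {x : ∀ i, X i | (MulAction.orbit (∀ i, G i) x).Finite} ∧
      ∃ p : ∀ i, X i, ∀ g : ∀ i, G i, g • p = p) := by
  have : ∀ i, ContinuousConstSMul (G i) (X i) := fun i => ⟨hcont i⟩
  choose x hdense hnotClosed using fun i => (hchaos i).1
  have hcard : #(orbit (∀ i, G i) x) = 𝔠 := by
    rw [orbit_pi]
    exact Cardinal.mk_univ_pi_of_mk_eq_aleph0 fun i => mk_orbit_eq_aleph0 (hnotClosed i)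
  refine ⟨Chaotic.pi hchaos, ⟨x, dense_orbit_pi hdense, hcard⟩, fun hfix => ?_⟩
  choose p hp using hfix
  refine ⟨(dense_iUnion_finset_piecewise (fun i => (hchaos i).dense_setOf_finite_orbit) p).mono
    ?_, p, fun g => funext fun i => hp i (g i)⟩
  simp only [iUnion_subset_iff, image_subset_iff]
  exact fun F y hy => finite_orbit_piecewise F (fun i _ => hy i (mem_univ i)) hp
end
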